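/- Let F : [-1,1]^n → ℝ be a multilinear polynomial with |F(x)| ≤ m for all x ∈ [-1,1]^n. Then for all x, y ∈ [-1,1]^n, |F(x) − F(y)| ≤ m·√n·‖x − y‖₂. -/

import Mathlib

/-!
A multilinear polynomial is affine in each coordinate separately. On a segment
`u ↦ a + b u`, `u ∈ [-1,1]`, bounded by `m`, the slope satisfies
`|b| = |(a + b) - (a - b)| / 2 ≤ m`, so changing one coordinate by `δ` changes `F` by at most
`m |δ|`. Walking from `x` to `y` one coordinate at a time gives
`|F x - F y| ≤ m ‖x - y‖₁ ≤ m √n ‖x - y‖₂` by Cauchy–Schwarz.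
-/

open Finset Function

theorem sum_abs_le_sqrt_card_mul_norm {ι : Type*} [Fintype ι] (x : EuclideanSpace ℝ ι) :
    ∑ i, |x i| ≤ √(Fintype.card ι) * ‖x‖ := by
  simpa [EuclideanSpace.norm_eq, sq_abs] using
    Real.sum_mul_le_sqrt_mul_sqrt univ (fun _ => 1) fun i => |x i|

section

variable {ι : Type*} [DecidableEq ι]

def multilinearEval [Fintype ι] (c : Finset ι → ℝ) (x : ι → ℝ) : ℝ :=
  ∑ S, c S * ∏ i ∈ S, x i

def IsCoordAffine (f : (ι → ℝ) → ℝ) : Prop :=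
  ∀ (w : ι → ℝ) (i : ι), ∃ a b : ℝ, ∀ u, f (update w i u) = a + b * u

theorem isCoordAffine_multilinearEval [Fintype ι] (c : Finset ι → ℝ) :
    IsCoordAffine (multilinearEval c) := by
  intro w i
  refine ⟨∑ S, if i ∈ S then 0 else c S * ∏ j ∈ S, w j,
    ∑ S, if i ∈ S then c S * ∏ j ∈ S \ {i}, w j else 0, fun u => ?_⟩
  rw [multilinearEval, sum_mul, ← sum_add_distrib]
  refine sum_congr rfl fun S _ => ?_
  by_cases hi : i ∈ S
  · simp only [hi, if_true, prod_update_of_mem hi]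
    ring
  · simp [hi, prod_update_of_notMem hi]

theorem IsCoordAffine.abs_sub_update_le {f : (ι → ℝ) → ℝ} (hf : IsCoordAffine f) {m : ℝ}
    (hbd : ∀ x, (∀ i, x i ∈ Set.Icc (-1 : ℝ) 1) → |f x| ≤ m)
    {w : ι → ℝ} (hw : ∀ i, w i ∈ Set.Icc (-1 : ℝ) 1) (i : ι) (s t : ℝ) :
    |f (update w i s) - f (update w i t)| ≤ m * |s - t| := by
  obtain ⟨a, b, hab⟩ := hf w i
  have hline : ∀ u ∈ Set.Icc (-1 : ℝ) 1, |a + b * u| ≤ m := fun u hu =>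
    hab u ▸ hbd _
      ((forall_update_iff w fun _ v => v ∈ Set.Icc (-1 : ℝ) 1).2 ⟨hu, fun j _ => hw j⟩)
  have hslope : |b| ≤ m := by
    have h1 := abs_le.1 (hline 1 (by norm_num))
    have h2 := abs_le.1 (hline (-1) (by norm_num))
    exact abs_le.2 ⟨by linarith, by linarith⟩
  calc |f (update w i s) - f (update w i t)| = |b| * |s - t| := by
        rw [hab, hab, ← abs_mul]
        ring_nf
    _ ≤ m * |s - t| := by gcongr

theorem abs_sub_le_mul_sum_abs_sub_of_update [Fintype ι] {K : Set ℝ} {f : (ι → ℝ) → ℝ} {m : ℝ}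
    (hf : ∀ w, (∀ j, w j ∈ K) → ∀ i s t, s ∈ K → t ∈ K →
      |f (update w i s) - f (update w i t)| ≤ m * |s - t|)
    {x y : ι → ℝ} (hx : ∀ i, x i ∈ K) (hy : ∀ i, y i ∈ K) :
    |f x - f y| ≤ m * ∑ i, |x i - y i| := by
  suffices h : ∀ s : Finset ι, |f (s.piecewise x y) - f y| ≤ m * ∑ i ∈ s, |x i - y i| by
    simpa using h univ
  intro s
  induction s using Finset.induction_on with
  | empty => simp
  | insert a s ha ih =>
    have hmem : ∀ j, s.piecewise x y j ∈ K := fun j => by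
      by_cases hj : j ∈ s <;> simp [hj, hx j, hy j]
    have hstep := hf _ hmem a (x a) (y a) (hx a) (hy a)
    rw [update_eq_self_iff.2 (piecewise_eq_of_notMem _ _ _ ha).symm] at hstep
    rw [piecewise_insert, sum_insert ha, mul_add]
    exact (abs_sub_le _ _ _).trans (add_le_add hstep ih)

end

/-- A multilinear polynomial bounded by `m` on the cube `[-1,1]^n` is
`(m√n)`-Lipschitz on the cube (Euclidean norm). -/
theorem stmt_10 (n : ℕ) (m : ℝ) (F : EuclideanSpace ℝ (Fin n) → ℝ)
    (c : Finset (Fin n) → ℝ)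
    (hF : ∀ x, F x = ∑ S : Finset (Fin n), c S * ∏ i ∈ S, x i)
    (hbd : ∀ x : EuclideanSpace ℝ (Fin n), (∀ i, x i ∈ Set.Icc (-1 : ℝ) 1) → |F x| ≤ m) :
    ∀ x y : EuclideanSpace ℝ (Fin n),
      (∀ i, x i ∈ Set.Icc (-1 : ℝ) 1) → (∀ i, y i ∈ Set.Icc (-1 : ℝ) 1) →
      |F x - F y| ≤ m * Real.sqrt n * ‖x - y‖ := by
  intro x y hx hy
  have hm : 0 ≤ m := (abs_nonneg _).trans (hbd 0 fun i => by simp)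
  have hcube : ∀ z : Fin n → ℝ, (∀ i, z i ∈ Set.Icc (-1 : ℝ) 1) →
      |multilinearEval c z| ≤ m := fun z hz => by
    simpa [hF, multilinearEval] using hbd (WithLp.toLp 2 z) hz
  calc |F x - F y| = |multilinearEval c x - multilinearEval c y| := by
        rw [hF, hF, multilinearEval, multilinearEval]
    _ ≤ m * ∑ i, |x i - y i| :=
        abs_sub_le_mul_sum_abs_sub_of_update (fun _ hw i s t _ _ =>
          (isCoordAffine_multilinearEval c).abs_sub_update_le hcube hw i s t) hx hy
    _ ≤ m * (√n * ‖x - y‖) := by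
        gcongr
        simpa using sum_abs_le_sqrt_card_mul_norm (x - y)
    _ = m * Real.sqrt n * ‖x - y‖ := by ring
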